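/- arXiv:2409.00730 — 4 statements merged into one kernel-verified Lean document; each statement's English description precedes it below -/
import Mathlib

section
/- Let n ≥ 1 and let 𝒢 be a set of maps from Euclidean space ℝⁿ to itself such that every G ∈ 𝒢 is a bijective isometry. Let μ₀ be a 𝒢-invariant probability measure on ℝⁿ, let X₀ be a random vector with law μ₀, let ε be a standard Gaussian random vector on ℝⁿ independent of X₀, and let σ > 0. Then the law of X₀ + σ·ε is 𝒢-invariant (the variance-exploding case of the paper's Theorem 1: Gaussian perturbation preserves invariance under groups of isometries). -/
open MeasureTheory ProbabilityTheory

/-- The standard Gaussian measure on `EuclideanSpace ℝ (Fin n)`: the law of a random vector with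
independent standard normal coordinates. -/
noncomputable def stdGaussian (n : ℕ) : Measure (EuclideanSpace ℝ (Fin n)) :=
  (Measure.pi fun _ : Fin n => gaussianReal 0 1).map
    (MeasurableEquiv.toLp 2 (Fin n → ℝ))

/-!
By Mazur–Ulam a bijective isometry `G` is affine, `G x = A x + b` with `A` a linear isometry, so
`G (X₀ + σ ε) = G X₀ + σ A ε`. The pair `(G X₀, A ε)` has the same law as `(X₀, ε)`: `G` preserves
`μ₀` by hypothesis, `A` preserves the standard Gaussian, and independence makes the joint law the
product of the two marginals.
-/

theorem stdGaussian_eq_stdGaussian_euclideanSpace (n : ℕ) :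
    stdGaussian n = ProbabilityTheory.stdGaussian (EuclideanSpace ℝ (Fin n)) :=
  map_pi_eq_stdGaussian

section

variable {E F : Type*} [NormedAddCommGroup E] [NormedSpace ℝ E] [NormedAddCommGroup F]
  [NormedSpace ℝ F]

theorem IsometryEquiv.map_add_smul (G : E ≃ᵢ F) (c : ℝ) (x y : E) :
    G (x + c • y) = G x + c • G.toRealLinearIsometryEquiv y := by
  have hG : ∀ z, G z = G.toRealLinearIsometryEquiv z + G 0 := fun z => by
    rw [G.toRealLinearIsometryEquiv_apply, sub_add_cancel]
  rw [hG (x + c • y), hG x, map_add, map_smul]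
  abel

variable [MeasurableSpace E] [BorelSpace E] [SecondCountableTopology E]

theorem IsometryEquiv.map_map_prod_add_smul (G : E ≃ᵢ E) {μ ν : Measure E} [SFinite μ]
    [SFinite ν] (hμ : μ.map G = μ) (hν : ν.map G.toRealLinearIsometryEquiv = ν) (c : ℝ) :
    ((μ.prod ν).map fun p => p.1 + c • p.2).map G = (μ.prod ν).map fun p => p.1 + c • p.2 := by
  have hf : Measurable fun p : E × E => p.1 + c • p.2 := by fun_prop
  have hG : Measurable G := G.continuous.measurable
  have hA : Measurable G.toRealLinearIsometryEquiv :=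
    G.toRealLinearIsometryEquiv.continuous.measurable
  have hcomm : (G ∘ fun p : E × E => p.1 + c • p.2)
      = (fun p : E × E => p.1 + c • p.2) ∘ Prod.map G G.toRealLinearIsometryEquiv :=
    funext fun p => G.map_add_smul c p.1 p.2
  rw [Measure.map_map hG hf, hcomm, ← Measure.map_map hf (hG.prodMap hA),
    ← Measure.map_prod_map _ _ hG hA, hμ, hν]

theorem ProbabilityTheory.IndepFun.map_add_smul_eq {Ω : Type*} [MeasurableSpace Ω]
    {P : Measure Ω} [IsFiniteMeasure P] {X Y : Ω → E} (hX : Measurable X) (hY : Measurable Y)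
    (hXY : IndepFun X Y P) (c : ℝ) :
    P.map (fun ω => X ω + c • Y ω) = ((P.map X).prod (P.map Y)).map fun p => p.1 + c • p.2 := by
  rw [← (indepFun_iff_map_prod_eq_prod_map_map hX.aemeasurable hY.aemeasurable).mp hXY,
    Measure.map_map (by fun_prop) (hX.prodMk hY)]
  rfl

end

theorem law_add_gaussian_invariant_general {n : ℕ}
    (𝒢 : Set (EuclideanSpace ℝ (Fin n) → EuclideanSpace ℝ (Fin n)))
    (hbij : ∀ G ∈ 𝒢, Function.Bijective G)
    (hiso : ∀ G ∈ 𝒢, ∀ x y, ‖G x - G y‖ = ‖x - y‖)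
    (μ₀ : Measure (EuclideanSpace ℝ (Fin n))) [IsProbabilityMeasure μ₀]
    (hμinv : ∀ G ∈ 𝒢, μ₀.map G = μ₀)
    {Ω : Type} [MeasureSpace Ω] [IsProbabilityMeasure (ℙ : Measure Ω)]
    (X₀ ε : Ω → EuclideanSpace ℝ (Fin n))
    (hX₀ : Measurable X₀) (hε : Measurable ε)
    (hlawX₀ : Measure.map X₀ ℙ = μ₀)
    (hlawε : Measure.map ε ℙ = stdGaussian n)
    (hindep : IndepFun X₀ ε ℙ)
    (σ : ℝ) :
    ∀ G ∈ 𝒢,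
      (Measure.map (fun ω => X₀ ω + σ • ε ω) ℙ).map G
        = Measure.map (fun ω => X₀ ω + σ • ε ω) ℙ := by
  intro G hG
  let Giso : EuclideanSpace ℝ (Fin n) ≃ᵢ EuclideanSpace ℝ (Fin n) :=
    ⟨Equiv.ofBijective G (hbij G hG), Isometry.of_dist_eq fun x y => by
      rw [dist_eq_norm, dist_eq_norm]
      exact hiso G hG x y⟩
  rw [hindep.map_add_smul_eq hX₀ hε σ, hlawX₀, hlawε, stdGaussian_eq_stdGaussian_euclideanSpace]
  exact Giso.map_map_prod_add_smul (hμinv G hG)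
    (stdGaussian_map Giso.toRealLinearIsometryEquiv) σ

/-- Variance-exploding case of the paper's Theorem 1: if `μ₀` is invariant under a family `𝒢` of
bijective isometries of `ℝⁿ`, `X₀ ∼ μ₀`, and `ε` is an independent standard Gaussian vector, then
the law of `X₀ + σ • ε` is `𝒢`-invariant. -/
theorem law_add_gaussian_invariant {n : ℕ} (hn : 1 ≤ n)
    (𝒢 : Set (EuclideanSpace ℝ (Fin n) → EuclideanSpace ℝ (Fin n)))
    (hbij : ∀ G ∈ 𝒢, Function.Bijective G)
    (hiso : ∀ G ∈ 𝒢, ∀ x y, ‖G x - G y‖ = ‖x - y‖)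
    (μ₀ : Measure (EuclideanSpace ℝ (Fin n))) [IsProbabilityMeasure μ₀]
    (hμinv : ∀ G ∈ 𝒢, μ₀.map G = μ₀)
    {Ω : Type} [MeasureSpace Ω] [IsProbabilityMeasure (ℙ : Measure Ω)]
    (X₀ ε : Ω → EuclideanSpace ℝ (Fin n))
    (hX₀ : Measurable X₀) (hε : Measurable ε)
    (hlawX₀ : Measure.map X₀ ℙ = μ₀)
    (hlawε : Measure.map ε ℙ = stdGaussian n)
    (hindep : IndepFun X₀ ε ℙ)
    (σ : ℝ) (hσ : 0 < σ) :
    ∀ G ∈ 𝒢,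
      (Measure.map (fun ω => X₀ ω + σ • ε ω) ℙ).map G
        = Measure.map (fun ω => X₀ ω + σ • ε ω) ℙ :=
  law_add_gaussian_invariant_general 𝒢 hbij hiso μ₀ hμinv X₀ ε hX₀ hε hlawX₀ hlawε hindep σ
end

section
/- Let n ≥ 1 and let 𝒢 be a set of maps from ℝⁿ to itself such that every G ∈ 𝒢 is a bijective isometry that preserves Lebesgue measure, and such that for every G ∈ 𝒢 and every real a with 0 < a < 1 there exists H ∈ 𝒢 with H(a·x) = a·G(x) for all x. Let μ₀ be a 𝒢-invariant probability measure on ℝⁿ, let X₀ have law μ₀, let ε be a standard Gaussian random vector on ℝⁿ independent of X₀, and let 0 < α ≤ 1 and σ > 0. Then the law of α·X₀ + σ·ε is 𝒢-invariant (the paper's Theorem 1: sufficient conditions for the invariance of q₀ to imply the invariance of the diffused marginal qₜ). -/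
/-!
By Mazur–Ulam every `G ∈ 𝒢` is affine, `G = L + G 0` with `L` a linear isometry. The homothety
condition puts `L + a • G 0` in `𝒢` for every `a ∈ (0, 1)`; two of these maps differ by a
translation by a multiple of `G 0`, which therefore preserves `μ₀`. A nonzero translation cannot
preserve a probability measure, hence `G = L`. A linear isometry preserves the standard
Gaussian, so by independence `(G X₀, G ε)` has the law of `(X₀, ε)`, and
`G (α • X₀ + σ • ε) = α • G X₀ + σ • G ε` has the law of `α • X₀ + σ • ε`.
-/

open MeasureTheory ProbabilityTheory Metric Set

lemma exists_measure_ball_add_self_gt {X : Type*} [PseudoMetricSpace X] [MeasurableSpace X]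
    {μ : Measure X} [IsFiniteMeasure μ] [NeZero μ] (x : X) :
    ∃ R : ℝ, μ univ < μ (ball x R) + μ (ball x R) := by
  have hlim := tendsto_measure_iUnion_atTop (μ := μ)
    (monotone_nat_of_le_succ fun k => ball_subset_ball (by simp) : Monotone fun k : ℕ => ball x k)
  rw [iUnion_ball_nat] at hlim
  obtain ⟨k, hk⟩ := (hlim.eventually_const_lt
    (ENNReal.half_lt_self (NeZero.ne (μ univ)) (measure_ne_top μ univ))).exists
  exact ⟨k, (ENNReal.add_halves (μ univ)).symm.trans_lt (ENNReal.add_lt_add hk hk)⟩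

lemma map_add_nsmul_eq_self {M : Type*} [AddMonoid M] [MeasurableSpace M] [MeasurableAdd M]
    {μ : Measure M} {v : M} (h : μ.map (· + v) = μ) (k : ℕ) : μ.map (· + k • v) = μ := by
  induction k with
  | zero => simp
  | succ k ih =>
    have hcomp : (· + (k + 1) • v) = (· + v) ∘ (· + k • v) := by
      funext x
      simp [succ_nsmul, add_assoc]
    rw [hcomp, ← Measure.map_map (measurable_add_const v) (measurable_add_const _), ih, h]

section TranslationInvariance

variable {E : Type*} [NormedAddCommGroup E] [NormedSpace ℝ E] [MeasurableSpace E] [BorelSpace E]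
  {μ : Measure E} [IsFiniteMeasure μ] [NeZero μ]

/-- Otherwise `μ` would give the same mass, more than half of the total, to the disjoint balls
`ball 0 R` and `ball (k • v) R` for `k` large. -/
lemma eq_zero_of_map_add_eq_self {v : E} (h : μ.map (· + v) = μ) : v = 0 := by
  by_contra hv
  obtain ⟨R, hR⟩ := exists_measure_ball_add_self_gt (μ := μ) 0
  obtain ⟨k, hk⟩ := exists_nat_gt (2 * R / ‖v‖)
  have hdisj : Disjoint (ball 0 R) (ball (k • v) R) := by
    refine ball_disjoint_ball ?_
    rw [dist_zero_left, RCLike.norm_nsmul ℝ, nsmul_eq_mul, ← two_mul]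
    exact ((div_lt_iff₀ (norm_pos_iff.2 hv)).1 hk).le
  have htrans : μ (ball (k • v) R) = μ (ball 0 R) := by
    conv_lhs => rw [← map_add_nsmul_eq_self h k]
    rw [Measure.map_apply (measurable_add_const _) measurableSet_ball]
    congr 1
    ext x
    simp [dist_eq_norm]
  have := measure_mono (μ := μ) (subset_univ (ball 0 R ∪ ball (k • v) R))
  rw [measure_union hdisj measurableSet_ball, htrans] at this
  exact this.not_gt hR

lemma eq_of_map_add_const_eq_self {f : E → E} (hf : Measurable f) {u w : E}
    (hu : μ.map (fun x => f x + u) = μ) (hw : μ.map (fun x => f x + w) = μ) : u = w := by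
  have hcomp : (fun x => f x + w) = (· + (w - u)) ∘ fun x => f x + u := by
    funext x
    simp [add_assoc]
  rw [hcomp, ← Measure.map_map (measurable_add_const _) (hf.add_const u), hu] at hw
  exact (sub_eq_zero.1 (eq_zero_of_map_add_eq_self hw)).symm

lemma IsometryEquiv.map_zero_eq_zero_of_homothety {𝒢 : Set (E → E)}
    (hhom : ∀ G ∈ 𝒢, ∀ a : ℝ, 0 < a → a < 1 → ∃ H ∈ 𝒢, ∀ x, H (a • x) = a • G x)
    (hμ : ∀ G ∈ 𝒢, μ.map G = μ) (G : E ≃ᵢ E) (hG : ⇑G ∈ 𝒢) : G 0 = 0 := by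
  set L := G.toRealLinearIsometryEquiv
  have hinv : ∀ a : ℝ, 0 < a → a < 1 → μ.map (fun x => L x + a • G 0) = μ := by
    intro a ha0 ha1
    obtain ⟨H, hH, hHa⟩ := hhom G hG a ha0 ha1
    convert hμ H hH using 2
    funext x
    have := hHa (a⁻¹ • x)
    rw [smul_inv_smul₀ ha0.ne'] at this
    rw [this, ← sub_add_cancel (G (a⁻¹ • x)) (G 0), ← toRealLinearIsometryEquiv_apply, smul_add,
      L.map_smul, smul_inv_smul₀ ha0.ne']
  have := eq_of_map_add_const_eq_self L.continuous.measurable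
    (hinv 2⁻¹ (by norm_num) (by norm_num)) (hinv 4⁻¹ (by norm_num) (by norm_num))
  by_contra h
  exact absurd (smul_left_injective ℝ h this) (by norm_num)

end TranslationInvariance

lemma stdGaussian_map_linearIsometryEquiv {n : ℕ}
    (L : EuclideanSpace ℝ (Fin n) ≃ₗᵢ[ℝ] EuclideanSpace ℝ (Fin n)) :
    (_root_.stdGaussian n).map L = _root_.stdGaussian n := by
  have h : _root_.stdGaussian n = ProbabilityTheory.stdGaussian (EuclideanSpace ℝ (Fin n)) :=
    map_pi_eq_stdGaussian
  rw [h, stdGaussian_map]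

lemma ProbabilityTheory.IndepFun.identDistrib_prodMk_comp {Ω E F : Type*} [MeasurableSpace Ω]
    [MeasurableSpace E] [MeasurableSpace F] {P : Measure Ω} [IsFiniteMeasure P]
    {X : Ω → E} {Y : Ω → F} (hXY : IndepFun X Y P) (hX : Measurable X) (hY : Measurable Y)
    {f : E → E} {g : F → F} (hf : Measurable f) (hg : Measurable g)
    (hfX : (P.map X).map f = P.map X) (hgY : (P.map Y).map g = P.map Y) :
    IdentDistrib (fun ω => (f (X ω), g (Y ω))) (fun ω => (X ω, Y ω)) P P where
  aemeasurable_fst := ((hf.comp hX).prodMk (hg.comp hY)).aemeasurable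
  aemeasurable_snd := (hX.prodMk hY).aemeasurable
  map_eq := by
    change P.map (fun ω => ((f ∘ X) ω, (g ∘ Y) ω)) = _
    rw [(indepFun_iff_map_prod_eq_prod_map_map (hf.comp hX).aemeasurable
      (hg.comp hY).aemeasurable).1 (hXY.comp hf hg),
      (indepFun_iff_map_prod_eq_prod_map_map hX.aemeasurable hY.aemeasurable).1 hXY,
      ← Measure.map_map hf hX, ← Measure.map_map hg hY, hfX, hgY]

theorem diffused_marginal_invariant_general {n : ℕ}
    (𝒢 : Set (EuclideanSpace ℝ (Fin n) → EuclideanSpace ℝ (Fin n)))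
    (hbij : ∀ G ∈ 𝒢, Function.Bijective G)
    (hiso : ∀ G ∈ 𝒢, ∀ x y, ‖G x - G y‖ = ‖x - y‖)
    (hhom : ∀ G ∈ 𝒢, ∀ a : ℝ, 0 < a → a < 1 → ∃ H ∈ 𝒢, ∀ x, H (a • x) = a • G x)
    (μ₀ : Measure (EuclideanSpace ℝ (Fin n))) [IsProbabilityMeasure μ₀]
    (hμinv : ∀ G ∈ 𝒢, μ₀.map G = μ₀)
    {Ω : Type} [MeasureSpace Ω] [IsProbabilityMeasure (ℙ : Measure Ω)]
    (X₀ ε : Ω → EuclideanSpace ℝ (Fin n))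
    (hX₀ : Measurable X₀) (hε : Measurable ε)
    (hlawX₀ : Measure.map X₀ ℙ = μ₀)
    (hlawε : Measure.map ε ℙ = stdGaussian n)
    (hindep : IndepFun X₀ ε ℙ)
    (α σ : ℝ) :
    ∀ G ∈ 𝒢,
      (Measure.map (fun ω => α • X₀ ω + σ • ε ω) ℙ).map G
        = Measure.map (fun ω => α • X₀ ω + σ • ε ω) ℙ := by
  intro G hG
  let e : EuclideanSpace ℝ (Fin n) ≃ᵢ EuclideanSpace ℝ (Fin n) :=
    ⟨Equiv.ofBijective G (hbij G hG), Isometry.of_dist_eq fun x y => by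
      rw [dist_eq_norm, dist_eq_norm]; exact hiso G hG x y⟩
  set L := e.toRealLinearIsometryEquiv
  have hGL : G = L := funext fun x => by
    rw [IsometryEquiv.toRealLinearIsometryEquiv_apply,
      e.map_zero_eq_zero_of_homothety hhom hμinv hG, sub_zero]
    rfl
  have hjoint := hindep.identDistrib_prodMk_comp hX₀ hε L.continuous.measurable
    L.continuous.measurable (by rw [hlawX₀, ← hGL, hμinv G hG])
    (by rw [hlawε, stdGaussian_map_linearIsometryEquiv])
  let add : EuclideanSpace ℝ (Fin n) × EuclideanSpace ℝ (Fin n) → EuclideanSpace ℝ (Fin n) :=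
    fun p => α • p.1 + σ • p.2
  calc (Measure.map (fun ω => α • X₀ ω + σ • ε ω) ℙ).map G
      = Measure.map (add ∘ fun ω => (L (X₀ ω), L (ε ω))) ℙ := by
        rw [hGL, Measure.map_map L.continuous.measurable (by fun_prop)]
        congr 1
        funext ω
        simp [add]
    _ = Measure.map (add ∘ fun ω => (X₀ ω, ε ω)) ℙ :=
        (hjoint.comp (by fun_prop : Measurable add)).map_eq

/-- The paper's Theorem 1: if every `G ∈ 𝒢` is a bijective, Lebesgue-measure-preserving isometry
of `ℝⁿ`, the homothety condition holds, and `μ₀` is `𝒢`-invariant, then the law of the diffused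
marginal `α • X₀ + σ • ε` is `𝒢`-invariant. -/
theorem diffused_marginal_invariant {n : ℕ} (hn : 1 ≤ n)
    (𝒢 : Set (EuclideanSpace ℝ (Fin n) → EuclideanSpace ℝ (Fin n)))
    (hbij : ∀ G ∈ 𝒢, Function.Bijective G)
    (hiso : ∀ G ∈ 𝒢, ∀ x y, ‖G x - G y‖ = ‖x - y‖)
    (hvol : ∀ G ∈ 𝒢, Measure.map G (volume : Measure (EuclideanSpace ℝ (Fin n))) = volume)
    (hhom : ∀ G ∈ 𝒢, ∀ a : ℝ, 0 < a → a < 1 → ∃ H ∈ 𝒢, ∀ x, H (a • x) = a • G x)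
    (μ₀ : Measure (EuclideanSpace ℝ (Fin n))) [IsProbabilityMeasure μ₀]
    (hμinv : ∀ G ∈ 𝒢, μ₀.map G = μ₀)
    {Ω : Type} [MeasureSpace Ω] [IsProbabilityMeasure (ℙ : Measure Ω)]
    (X₀ ε : Ω → EuclideanSpace ℝ (Fin n))
    (hX₀ : Measurable X₀) (hε : Measurable ε)
    (hlawX₀ : Measure.map X₀ ℙ = μ₀)
    (hlawε : Measure.map ε ℙ = stdGaussian n)
    (hindep : IndepFun X₀ ε ℙ)
    (α σ : ℝ) (hα0 : 0 < α) (hα1 : α ≤ 1) (hσ : 0 < σ) :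
    ∀ G ∈ 𝒢,
      (Measure.map (fun ω => α • X₀ ω + σ • ε ω) ℙ).map G
        = Measure.map (fun ω => α • X₀ ω + σ • ε ω) ℙ :=
  diffused_marginal_invariant_general 𝒢 hbij hiso hhom μ₀ hμinv X₀ ε hX₀ hε hlawX₀ hlawε hindep α σ
end

section
/- Let q : ℝⁿ → ℝ be positive and differentiable, and let G : ℝⁿ → ℝⁿ be differentiable with q(G(x)) = q(x) for all x. Then for every x the gradient of log q satisfies (DG(x))*(∇ log q(G(x))) = ∇ log q(x), where DG(x) is the Fréchet derivative of G at x and (DG(x))* is its adjoint with respect to the Euclidean inner product. In particular, if DG(x) is invertible, then ∇ log q(G(x)) = ((DG(x))*)⁻¹ (∇ log q(x)); that is, the score function of a 𝒢-invariant distribution is (𝒢, ∇⁻¹)-equivariant. -/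
/-!
Taking logarithms preserves the invariance, `log q ∘ G = log q`. The chain rule for gradients,
`∇(f ∘ G)(x) = DG(x)* ∇f(G x)`, applied to `f = log q` gives the first identity; the second
follows by applying `(DG(x)⁻¹)*`, the inverse of `DG(x)*`.
-/

open scoped RealInnerProductSpace
open ContinuousLinearMap

section Gradient

variable {𝕜 E F : Type*} [RCLike 𝕜]
  [NormedAddCommGroup E] [InnerProductSpace 𝕜 E] [CompleteSpace E]
  [NormedAddCommGroup F] [InnerProductSpace 𝕜 F] [CompleteSpace F]

theorem HasGradientAt.comp_hasFDerivAt {f : F → 𝕜} {f' : F} {G : E → F} {G' : E →L[𝕜] F}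
    {x : E} (hf : HasGradientAt f f' (G x)) (hG : HasFDerivAt G G' x) :
    HasGradientAt (f ∘ G) (adjoint G' f') x := by
  rw [hasGradientAt_iff_hasFDerivAt]
  refine ((hasGradientAt_iff_hasFDerivAt.mp hf).comp x hG).congr_fderiv ?_
  ext v
  simp only [InnerProductSpace.toDual_apply_apply, adjoint_inner_left, comp_apply]

theorem gradient_comp {f : F → 𝕜} {G : E → F} {x : E}
    (hf : DifferentiableAt 𝕜 f (G x)) (hG : DifferentiableAt 𝕜 G x) :
    gradient (f ∘ G) x = adjoint (fderiv 𝕜 G x) (gradient f (G x)) :=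
  (hf.hasGradientAt.comp_hasFDerivAt hG.hasFDerivAt).gradient

theorem adjoint_fderiv_gradient_of_comp_eq {f : E → 𝕜} {G : E → E} (hfG : f ∘ G = f) {x : E}
    (hf : DifferentiableAt 𝕜 f (G x)) (hG : DifferentiableAt 𝕜 G x) :
    adjoint (fderiv 𝕜 G x) (gradient f (G x)) = gradient f x := by
  rw [← gradient_comp hf hG, hfG]

theorem ContinuousLinearEquiv.adjoint_symm_adjoint_apply (e : E ≃L[𝕜] F) (y : F) :
    adjoint (e.symm : F →L[𝕜] E) (adjoint (e : E →L[𝕜] F) y) = y := by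
  rw [← comp_apply, ← adjoint_comp, e.coe_comp_coe_symm, adjoint_id, id_apply]

end Gradient

/-- The score function of a `𝒢`-invariant distribution is `(𝒢, ∇⁻¹)`-equivariant: if
`q ∘ G = q` with `q` positive and differentiable and `G` differentiable, then
`(DG(x))* (∇ log q (G x)) = ∇ log q (x)`, and whenever `DG(x)` is invertible,
`∇ log q (G x) = ((DG(x))*)⁻¹ (∇ log q x)`. -/
theorem score_equivariant {n : ℕ}
    (q : EuclideanSpace ℝ (Fin n) → ℝ)
    (G : EuclideanSpace ℝ (Fin n) → EuclideanSpace ℝ (Fin n))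
    (hq_pos : ∀ x, 0 < q x) (hq : Differentiable ℝ q)
    (hG : Differentiable ℝ G)
    (hinv : ∀ x, q (G x) = q x) :
    ∀ x,
      (ContinuousLinearMap.adjoint (fderiv ℝ G x))
          (gradient (fun y => Real.log (q y)) (G x))
        = gradient (fun y => Real.log (q y)) x
      ∧ ∀ e : EuclideanSpace ℝ (Fin n) ≃L[ℝ] EuclideanSpace ℝ (Fin n),
          (e : EuclideanSpace ℝ (Fin n) →L[ℝ] EuclideanSpace ℝ (Fin n)) = fderiv ℝ G x →
          gradient (fun y => Real.log (q y)) (G x)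
            = (ContinuousLinearMap.adjoint
                (e.symm : EuclideanSpace ℝ (Fin n) →L[ℝ] EuclideanSpace ℝ (Fin n)))
                (gradient (fun y => Real.log (q y)) x) := by
  intro x
  have hlogq : Differentiable ℝ fun y => Real.log (q y) :=
    fun y => (hq y).log (hq_pos y).ne'
  have hlogq_inv : (fun y => Real.log (q y)) ∘ G = fun y => Real.log (q y) := by
    funext y
    simp only [Function.comp_apply, hinv]
  have hscore := adjoint_fderiv_gradient_of_comp_eq hlogq_inv (hlogq (G x)) (hG x)
  refine ⟨hscore, fun e he => ?_⟩
  rw [← hscore, ← he, e.adjoint_symm_adjoint_apply]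
end

section
/- Let q be a positive differentiable function on configurations of m points in ℝⁿ (i.e., on the space of functions C : Fin m → ℝⁿ with the product Euclidean inner product) that is SE(n)-invariant: q(G(C)) = q(C) for every rotation R (orthogonal n×n matrix with det R = 1) and every b ∈ ℝⁿ, where G(C) is the configuration i ↦ R·(C i) + b. Then the gradient of log q is SO(n)-equivariant and translation-invariant: for every such R, b and every configuration C, the i-th component of ∇ log q at the transformed configuration G(C) equals R applied to the i-th component of ∇ log q at C, for each i (the paper's claim that the score function of an SE(n)-invariant distribution is SO(n)-equivariant and translation-invariant). -/
open scoped RealInnerProductSpace Gradient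
open Matrix

/-! If `f (L x + a) = f x` for a linear isometric equivalence `L`, the chain rule gives
`∇ f x = L⁻¹ (∇ f (L x + a))`, since the adjoint of `L` is `L⁻¹`. No differentiability is needed:
the derivative of a composition with a continuous linear equivalence or a translation is computed
unconditionally, so the junk value `0` at non-differentiable points is transported as well.
A rotation `R` acting on every point of a configuration is such an `L`. -/

section Gradient

variable {𝕜 E F : Type*} [RCLike 𝕜]
  [NormedAddCommGroup E] [InnerProductSpace 𝕜 E] [CompleteSpace E]
  [NormedAddCommGroup F] [InnerProductSpace 𝕜 F] [CompleteSpace F]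

theorem gradient_comp_add_right (f : F → 𝕜) (a x : F) :
    ∇ (fun y => f (y + a)) x = ∇ f (x + a) := by
  rw [gradient, gradient, fderiv_comp_add_right]

theorem LinearIsometryEquiv.gradient_comp (L : E ≃ₗᵢ[𝕜] F) (f : F → 𝕜) (x : E) :
    ∇ (f ∘ L) x = L.symm (∇ f (L x)) := by
  refine ext_inner_right 𝕜 fun y => ?_
  rw [inner_gradient_left, ← L.inner_map_map, LinearIsometryEquiv.apply_symm_apply,
    inner_gradient_left]
  exact congrArg (· y) (L.toContinuousLinearEquiv.comp_right_fderiv (f := f))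

theorem gradient_linearIsometryEquiv_add_of_invariant {f : F → 𝕜} (L : F ≃ₗᵢ[𝕜] F) (a : F)
    (hf : ∀ x, f (L x + a) = f x) (x : F) : ∇ f (L x + a) = L (∇ f x) := by
  have hcomp : f = (fun y => f (y + a)) ∘ L := funext fun y => (hf y).symm
  conv_rhs => rw [hcomp, L.gradient_comp, gradient_comp_add_right, L.apply_symm_apply]

end Gradient

noncomputable def Matrix.toEuclideanLinearIsometryEquiv {𝕜 ι : Type*} [RCLike 𝕜] [Fintype ι]
    [DecidableEq ι] {U : Matrix ι ι 𝕜} (hU : U ∈ unitaryGroup ι 𝕜) :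
    EuclideanSpace 𝕜 ι ≃ₗᵢ[𝕜] EuclideanSpace 𝕜 ι :=
  Unitary.linearIsometryEquiv ⟨toEuclideanCLM (n := ι) (𝕜 := 𝕜) U, Unitary.map_mem _ hU⟩

theorem Matrix.mem_unitaryGroup_of_transpose_mul_self {ι : Type*} [Fintype ι] [DecidableEq ι]
    {R : Matrix ι ι ℝ} (hR : Rᵀ * R = 1) : R ∈ unitaryGroup ι ℝ := by
  rwa [mem_unitaryGroup_iff', star_eq_conjTranspose, conjTranspose_eq_transpose_of_trivial]

theorem score_SEn_equivariant_general {n m : ℕ}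
    (q : PiLp 2 (fun _ : Fin m => EuclideanSpace ℝ (Fin n)) → ℝ)
    (hinv : ∀ (R : Matrix (Fin n) (Fin n) ℝ), Rᵀ * R = 1 → R.det = 1 →
      ∀ (b : EuclideanSpace ℝ (Fin n)) (C : PiLp 2 fun _ : Fin m => EuclideanSpace ℝ (Fin n)),
        q (WithLp.toLp 2 (fun i => Matrix.toEuclideanLin R (C i) + b)) = q C) :
    ∀ (R : Matrix (Fin n) (Fin n) ℝ), Rᵀ * R = 1 → R.det = 1 →
      ∀ (b : EuclideanSpace ℝ (Fin n)) (C : PiLp 2 fun _ : Fin m => EuclideanSpace ℝ (Fin n))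
        (i : Fin m),
        gradient (fun D => Real.log (q D)) (WithLp.toLp 2 (fun j => Matrix.toEuclideanLin R (C j) + b)) i
          = Matrix.toEuclideanLin R (gradient (fun D => Real.log (q D)) C i) := by
  intro R hR hdet b C i
  let rotate := LinearIsometryEquiv.piLpCongrRight 2 fun _ : Fin m =>
    toEuclideanLinearIsometryEquiv (mem_unitaryGroup_of_transpose_mul_self hR)
  let shift : PiLp 2 fun _ : Fin m => EuclideanSpace ℝ (Fin n) := WithLp.toLp 2 fun _ => b
  have hmotion : ∀ D, WithLp.toLp 2 (fun j => toEuclideanLin R (D j) + b) = rotate D + shift :=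
    fun _ => rfl
  have hlog_inv : ∀ D, Real.log (q (rotate D + shift)) = Real.log (q D) := fun D => by
    rw [← hmotion, hinv R hR hdet b D]
  rw [hmotion, gradient_linearIsometryEquiv_add_of_invariant rotate shift hlog_inv]
  rfl

/-- The score function of an SE(n)-invariant distribution on configurations of `m` points in
`ℝⁿ` is SO(n)-equivariant and translation-invariant: for a positive differentiable `q` on the
configuration space (with the product Euclidean inner product) satisfying
`q (fun i => R (C i) + b) = q C` for every rotation `R` and translation `b`, each component of
the gradient of `log q` at the transformed configuration equals `R` applied to the corresponding
component of the gradient at `C`. -/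
theorem score_SEn_equivariant {n m : ℕ}
    (q : PiLp 2 (fun _ : Fin m => EuclideanSpace ℝ (Fin n)) → ℝ)
    (hq_pos : ∀ C, 0 < q C) (hq : Differentiable ℝ q)
    (hinv : ∀ (R : Matrix (Fin n) (Fin n) ℝ), Rᵀ * R = 1 → R.det = 1 →
      ∀ (b : EuclideanSpace ℝ (Fin n)) (C : PiLp 2 fun _ : Fin m => EuclideanSpace ℝ (Fin n)),
        q (WithLp.toLp 2 (fun i => Matrix.toEuclideanLin R (C i) + b)) = q C) :
    ∀ (R : Matrix (Fin n) (Fin n) ℝ), Rᵀ * R = 1 → R.det = 1 →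
      ∀ (b : EuclideanSpace ℝ (Fin n)) (C : PiLp 2 fun _ : Fin m => EuclideanSpace ℝ (Fin n))
        (i : Fin m),
        gradient (fun D => Real.log (q D)) (WithLp.toLp 2 (fun j => Matrix.toEuclideanLin R (C j) + b)) i
          = Matrix.toEuclideanLin R (gradient (fun D => Real.log (q D)) C i) :=
  score_SEn_equivariant_general q hinv
end
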